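/- The group L₆ presented by three generators a, t, u subject to the relations [t,a] = u, [u,a] = t⁶u⁶, [u,t] = t⁹, u⁹ = 1, and [u,t]³ = 1 is infinite. -/
import Mathlib


/-- The commutator `[x,y] = x⁻¹y⁻¹xy`. -/
def cmt {G : Type} [Group G] (x y : G) : G := x⁻¹ * y⁻¹ * x * y

namespace L6

/-- The generator `a`. -/
def a : FreeGroup (Fin 3) := FreeGroup.of 0
/-- The generator `t`. -/
def t : FreeGroup (Fin 3) := FreeGroup.of 1
/-- The generator `u`. -/
def u : FreeGroup (Fin 3) := FreeGroup.of 2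

/-- The relators corresponding to the relations `[t,a] = u`, `[u,a] = t⁶u⁶`,
`[u,t] = t⁹`, `u⁹ = 1` and `[u,t]³ = 1`. -/
def rels : Set (FreeGroup (Fin 3)) :=
  {cmt t a * u⁻¹, cmt u a * (t ^ 6 * u ^ 6)⁻¹, cmt u t * (t ^ 9)⁻¹, u ^ 9,
   (cmt u t) ^ 3}

end L6

/-- The map sending `a ↦ 1`, `t ↦ 0`, `u ↦ 0` in `ℤ` (written multiplicatively). -/
def L6aux : Fin 3 → Multiplicative ℤ :=
  fun i => if i = 0 then Multiplicative.ofAdd 1 else 1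

lemma L6aux_rels : ∀ r ∈ L6.rels, FreeGroup.lift L6aux r = 1 := by
  intro r hr
  have ha : FreeGroup.lift L6aux L6.a = Multiplicative.ofAdd 1 := by
    simp [L6.a, L6aux]
  have ht : FreeGroup.lift L6aux L6.t = 1 := by simp [L6.t, L6aux]
  have hu : FreeGroup.lift L6aux L6.u = 1 := by simp [L6.u, L6aux]
  rcases hr with h | h | h | h | h <;> subst h <;>
    simp [cmt, map_mul, map_inv, map_pow, ha, ht, hu]

/-- The homomorphism `L₆ →* ℤ`. -/
def L6phi : PresentedGroup L6.rels →* Multiplicative ℤ :=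
  PresentedGroup.toGroup L6aux_rels

/-- The group `L₆ = ⟨a,t,u ∣ [t,a] = u, [u,a] = t⁶u⁶, [u,t] = t⁹, u⁹ = 1, [u,t]³ = 1⟩`
is infinite. -/
theorem L6_infinite : Infinite (PresentedGroup L6.rels) := by
  refine Infinite.of_surjective L6phi ?_
  intro z
  refine ⟨(PresentedGroup.of 0) ^ (Multiplicative.toAdd z), ?_⟩
  have h0 : L6phi (PresentedGroup.of 0) = Multiplicative.ofAdd 1 := by
    rw [L6phi, PresentedGroup.toGroup.of]; simp [L6aux]
  rw [map_zpow, h0]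
  rw [← ofAdd_zsmul]
  simp
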